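/- For the decomposition of the one-dimensional Fermi-Hubbard Hamiltonian, [H_1, [H_3, H_1]] = −4v²u Σ_{i∈Λ'} ( (n_{i↑} − n_{i+1,↑})(n_{i↓} − n_{i+1,↓}) + h̃_{i,i+1,↑} · h̃_{i,i+1,↓} ). -/

import Mathlib

/-!
Bilinears in the fermion modes obey
`[a_i† a_j, a_k† a_l] = δ_{jk} a_i† a_l - δ_{li} a_k† a_j`, so operators supported on disjoint
sets of modes commute. The bonds `(2i, 2i+1)` are pairwise disjoint, hence the double commutator
is the sum of its single-bond contributions. On one bond `(p, q)` write `T_σ = h_{pqσ}`,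
`S_σ = h̃_{pqσ}`, `N_σ = n_{pσ} - n_{qσ}`: the relation above gives `[n_{pσ}, T_σ] = S_σ`,
`[n_{qσ}, T_σ] = -S_σ`, `[T_σ, S_σ] = -2 N_σ`, `[T_σ, N_σ] = -2 S_σ`, and the two spins commute.
Therefore `[D, T] = S_↑ N_↓ + N_↑ S_↓` for the bond interaction `D`, and
`[T, [D, T]] = -4 (N_↑ N_↓ + S_↑ S_↓)`.
-/

/-- The hopping term `h_{ijσ} = a_{iσ}† a_{jσ} + a_{jσ}† a_{iσ}`. -/
noncomputable def hop {E : Type*} [NormedAddCommGroup E] [InnerProductSpace ℂ E]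
    [CompleteSpace E] {Λ : Type*} (a : Λ → Bool → E →L[ℂ] E) (i j : Λ) (σ : Bool) :
    E →L[ℂ] E :=
  star (a i σ) * a j σ + star (a j σ) * a i σ

/-- The signed hopping term `h̃_{ijσ} = a_{iσ}† a_{jσ} − a_{jσ}† a_{iσ}`. -/
noncomputable def shop {E : Type*} [NormedAddCommGroup E] [InnerProductSpace ℂ E]
    [CompleteSpace E] {Λ : Type*} (a : Λ → Bool → E →L[ℂ] E) (i j : Λ) (σ : Bool) :
    E →L[ℂ] E :=
  star (a i σ) * a j σ - star (a j σ) * a i σ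

/-- The number operator `n_{iσ} = a_{iσ}† a_{iσ}`. -/
noncomputable def num {E : Type*} [NormedAddCommGroup E] [InnerProductSpace ℂ E]
    [CompleteSpace E] {Λ : Type*} (a : Λ → Bool → E →L[ℂ] E) (i : Λ) (σ : Bool) :
    E →L[ℂ] E :=
  star (a i σ) * a i σ

/-- The "even-odd" kinetic term `H₁ = v Σ_{i∈Λ'} Σ_σ h_{i,i+1,σ}` of the one-dimensional
Fermi-Hubbard Hamiltonian, with `Λ' = {0, 2, …, L−2} ⊂ ℤ/Lℤ` and spin `↑ = true`, `↓ = false`. -/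
noncomputable def FH1 {E : Type*} [NormedAddCommGroup E] [InnerProductSpace ℂ E]
    [CompleteSpace E] {L : ℕ} (a : ZMod L → Bool → E →L[ℂ] E) (v : ℝ) : E →L[ℂ] E :=
  (v : ℂ) • ∑ i ∈ Finset.range (L / 2), ∑ σ : Bool,
    hop a ((2 * i : ℕ) : ZMod L) (((2 * i : ℕ) : ZMod L) + 1) σ

/-- The "odd-even" kinetic term `H₂ = v Σ_{i∈Λ'} Σ_σ h_{i−1,i,σ}`. -/
noncomputable def FH2 {E : Type*} [NormedAddCommGroup E] [InnerProductSpace ℂ E]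
    [CompleteSpace E] {L : ℕ} (a : ZMod L → Bool → E →L[ℂ] E) (v : ℝ) : E →L[ℂ] E :=
  (v : ℂ) • ∑ i ∈ Finset.range (L / 2), ∑ σ : Bool,
    hop a (((2 * i : ℕ) : ZMod L) - 1) ((2 * i : ℕ) : ZMod L) σ

/-- The interaction term `H₃ = u Σ_{i∈Λ'} (n_{i↑}n_{i↓} + n_{i+1,↑}n_{i+1,↓})`. -/
noncomputable def FH3 {E : Type*} [NormedAddCommGroup E] [InnerProductSpace ℂ E]
    [CompleteSpace E] {L : ℕ} (a : ZMod L → Bool → E →L[ℂ] E) (u : ℝ) : E →L[ℂ] E :=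
  (u : ℂ) • ∑ i ∈ Finset.range (L / 2),
    (num a ((2 * i : ℕ) : ZMod L) true * num a ((2 * i : ℕ) : ZMod L) false +
      num a (((2 * i : ℕ) : ZMod L) + 1) true * num a (((2 * i : ℕ) : ZMod L) + 1) false)

open Finset

theorem smul_lie_smul_lie_smul {𝕜 A : Type*} [CommRing 𝕜] [Ring A] [Algebra 𝕜 A] (c d : 𝕜)
    (x y : A) : ⁅c • x, ⁅d • y, c • x⁆⁆ = (c * d * c) • ⁅x, ⁅y, x⁆⁆ := by
  simp only [Ring.lie_def, mul_sub, sub_mul, smul_mul_smul_comm, smul_sub, mul_assoc]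
  ring_nf

namespace ZMod

theorem natCast_inj_of_lt {L m k : ℕ} (hm : m < L) (hk : k < L) :
    (m : ZMod L) = k ↔ m = k := by
  rw [natCast_eq_natCast_iff', Nat.mod_eq_of_lt hm, Nat.mod_eq_of_lt hk]

theorem natCast_two_mul_add_one {L : ℕ} (i : ℕ) :
    ((2 * i : ℕ) : ZMod L) + 1 = ((2 * i + 1 : ℕ) : ZMod L) := by
  push_cast; ring

theorem natCast_two_mul_ne_add_one {L i : ℕ} (hi : i < L / 2) :
    ((2 * i : ℕ) : ZMod L) ≠ ((2 * i : ℕ) : ZMod L) + 1 := by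
  rw [natCast_two_mul_add_one, Ne, natCast_inj_of_lt (by omega) (by omega)]
  omega

theorem disjoint_natCast_two_mul_pair {L i j : ℕ} (hi : i < L / 2) (hj : j < L / 2)
    (hij : i ≠ j) :
    Disjoint ({((2 * i : ℕ) : ZMod L), ((2 * i : ℕ) : ZMod L) + 1} : Finset (ZMod L))
      {((2 * j : ℕ) : ZMod L), ((2 * j : ℕ) : ZMod L) + 1} := by
  have ne : ∀ m k : ℕ, m < L → k < L → m ≠ k → (m : ZMod L) ≠ k := fun m k hm hk hmk =>
    (natCast_inj_of_lt hm hk).not.2 hmk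
  simp only [natCast_two_mul_add_one, Finset.disjoint_insert_left, Finset.disjoint_insert_right,
    Finset.disjoint_singleton, Finset.mem_insert, Finset.mem_singleton, not_or]
  refine ⟨⟨?_, ?_⟩, ?_, ?_⟩ <;> exact ne _ _ (by omega) (by omega) (by omega)

end ZMod

section LieOfAssociative

-- Mathlib states its Lie-bracket lemmas for a `LieRing`; the ring commutator of an associative
-- ring is one only through this instance, which is not global.
attribute [local instance] LieRing.ofAssociativeRing

namespace Ring

variable {R : Type*} [Ring R]

theorem mul_lie (x y z : R) : ⁅x * y, z⁆ = x * ⁅y, z⁆ + ⁅x, z⁆ * y := by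
  simp only [Ring.lie_def]
  noncomm_ring

theorem lie_mul (x y z : R) : ⁅x, y * z⁆ = ⁅x, y⁆ * z + y * ⁅x, z⁆ := by
  simp only [Ring.lie_def]
  noncomm_ring

end Ring

theorem Commute.lie_right {R : Type*} [Ring R] {x y z : R} (hy : Commute x y)
    (hz : Commute x z) : Commute x ⁅y, z⁆ := by
  rw [Ring.lie_def]
  exact (hy.mul_right hz).sub_right (hz.mul_right hy)

theorem lie_sum_lie_sum_sum {R ι : Type*} [Ring R] {s : Finset ι} {K D : ι → R}
    (hK : (s : Set ι).Pairwise fun i j => Commute (K i) (K j))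
    (hD : (s : Set ι).Pairwise fun i j => Commute (D i) (K j)) :
    ⁅∑ i ∈ s, K i, ⁅∑ i ∈ s, D i, ∑ i ∈ s, K i⁆⁆ = ∑ i ∈ s, ⁅K i, ⁅D i, K i⁆⁆ := by
  have inner : ⁅∑ i ∈ s, D i, ∑ i ∈ s, K i⁆ = ∑ j ∈ s, ⁅D j, K j⁆ := by
    rw [sum_lie]
    refine sum_congr rfl fun i hi => ?_
    rw [lie_sum, sum_eq_single_of_mem i hi fun j hj hji => (hD hi hj hji.symm).lie_eq]
  rw [inner, lie_sum]
  refine sum_congr rfl fun j hj => ?_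
  rw [sum_lie, sum_eq_single_of_mem j hj fun i hi hij => ?_]
  exact ((hD hj hi hij.symm).symm.lie_right (hK hi hj hij)).lie_eq

/-- The canonical anticommutation relations (CAR) for annihilation operators `a i`. -/
structure IsCAR {R ι : Type*} [Ring R] [StarRing R] [DecidableEq ι] (a : ι → R) : Prop where
  anticomm : ∀ i j, a i * a j + a j * a i = 0
  anticomm_star : ∀ i j, a i * star (a j) + star (a j) * a i = if i = j then 1 else 0

namespace IsCAR

variable {R ι : Type*} [Ring R] [StarRing R] [DecidableEq ι] {a : ι → R}

theorem lie_star_mul_star_mul (h : IsCAR a) (i j k l : ι) :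
    ⁅star (a i) * a j, star (a k) * a l⁆
      = (if j = k then star (a i) * a l else 0) - (if l = i then star (a k) * a j else 0) := by
  have hjk : a j * star (a k) = (if j = k then 1 else 0) - star (a k) * a j :=
    eq_sub_of_add_eq (h.anticomm_star j k)
  have hli : star (a i) * a l = (if l = i then 1 else 0) - a l * star (a i) :=
    eq_sub_of_add_eq' (h.anticomm_star l i)
  have hcc : star (a i) * star (a k) = -(star (a k) * star (a i)) := by
    refine eq_neg_of_add_eq_zero_left ?_
    simpa [star_add, star_mul, add_comm] using congrArg star (h.anticomm k i)
  have haa : a j * a l = -(a l * a j) := eq_neg_of_add_eq_zero_left (h.anticomm j l)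
  calc ⁅star (a i) * a j, star (a k) * a l⁆
      = star (a i) * (a j * star (a k)) * a l - star (a k) * a l * (star (a i) * a j) := by
        rw [Ring.lie_def]; noncomm_ring
    _ = star (a i) * (if j = k then 1 else 0) * a l
          - star (a i) * star (a k) * (a j * a l) - star (a k) * a l * (star (a i) * a j) := by
        rw [hjk]; noncomm_ring
    _ = star (a i) * (if j = k then 1 else 0) * a l
          - star (a k) * (star (a i) * a l) * a j - star (a k) * a l * (star (a i) * a j) := by
        rw [hcc, haa]; noncomm_ring
    _ = star (a i) * (if j = k then 1 else 0) * a l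
          - star (a k) * (if l = i then 1 else 0) * a j := by
        rw [hli]; noncomm_ring
    _ = _ := by split_ifs <;> simp

end IsCAR

section Hubbard

variable {E : Type*} [NormedAddCommGroup E] [InnerProductSpace ℂ E] [CompleteSpace E]
  {Λ : Type*} [DecidableEq Λ] {a : Λ → Bool → E →L[ℂ] E}

theorem isCAR_uncurry
    (car1 : ∀ (i j : Λ) (σ τ : Bool), a i σ * a j τ + a j τ * a i σ = 0)
    (car2 : ∀ (i j : Λ) (σ τ : Bool),
      a i σ * star (a j τ) + star (a j τ) * a i σ = if i = j ∧ σ = τ then 1 else 0) :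
    IsCAR (Function.uncurry a) where
  anticomm := fun (i, σ) (j, τ) => car1 i j σ τ
  anticomm_star := fun (i, σ) (j, τ) => by simpa using car2 i j σ τ

variable (a) in
noncomputable def bondHop (p q : Λ) : E →L[ℂ] E := ∑ σ : Bool, hop a p q σ

variable (a) in
noncomputable def bondInteraction (p q : Λ) : E →L[ℂ] E :=
  num a p true * num a p false + num a q true * num a q false

namespace IsCAR

variable (h : IsCAR (Function.uncurry a))
include h

theorem lie_star_mul_star_mul_uncurry (i j k l : Λ) (σ σ' τ τ' : Bool) :
    ⁅star (a i σ) * a j σ', star (a k τ) * a l τ'⁆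
      = (if j = k ∧ σ' = τ then star (a i σ) * a l τ' else 0)
        - (if l = i ∧ τ' = σ then star (a k τ) * a j σ' else 0) := by
  simpa [Prod.ext_iff] using h.lie_star_mul_star_mul (i, σ) (j, σ') (k, τ) (l, τ')

theorem lie_hop_shop (p q : Λ) (σ : Bool) :
    ⁅hop a p q σ, shop a p q σ⁆ = (-2 : ℂ) • (num a p σ - num a q σ) := by
  simp only [hop, shop, lie_sub, add_lie, lie_self, h.lie_star_mul_star_mul_uncurry, and_self,
    ↓reduceIte, zero_add, add_zero, num, neg_smul]
  module

section SpinFlip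

variable {σ τ : Bool} (hστ : σ ≠ τ)
include hστ

theorem lie_num_hop_of_ne (r p q : Λ) : ⁅num a r σ, hop a p q τ⁆ = 0 := by
  simp [num, hop, lie_add, h.lie_star_mul_star_mul_uncurry, hστ, hστ.symm]

theorem lie_hop_shop_of_ne (p q : Λ) : ⁅hop a p q σ, shop a p q τ⁆ = 0 := by
  simp [hop, shop, add_lie, lie_sub, h.lie_star_mul_star_mul_uncurry, hστ, hστ.symm]

theorem lie_hop_num_sub_num_of_ne (p q : Λ) :
    ⁅hop a p q σ, num a p τ - num a q τ⁆ = 0 := by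
  simp [hop, num, add_lie, lie_sub, h.lie_star_mul_star_mul_uncurry, hστ, hστ.symm]

end SpinFlip

section DisjointBonds

variable {p q p' q' : Λ} (hd : Disjoint ({p, q} : Finset Λ) {p', q'})
include hd

theorem commute_bondHop : Commute (bondHop a p q) (bondHop a p' q') := by
  obtain ⟨⟨hpp', hpq'⟩, hqp', hqq'⟩ : (p ≠ p' ∧ p ≠ q') ∧ q ≠ p' ∧ q ≠ q' := by
    simpa using Finset.disjoint_left.1 hd
  rw [commute_iff_lie_eq]
  simp [bondHop, hop, add_lie, lie_add, h.lie_star_mul_star_mul_uncurry, hpp', hpq', hqp', hqq',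
    hpp'.symm, hpq'.symm, hqp'.symm, hqq'.symm]

theorem commute_bondInteraction_bondHop :
    Commute (bondInteraction a p q) (bondHop a p' q') := by
  obtain ⟨⟨hpp', hpq'⟩, hqp', hqq'⟩ : (p ≠ p' ∧ p ≠ q') ∧ q ≠ p' ∧ q ≠ q' := by
    simpa using Finset.disjoint_left.1 hd
  rw [commute_iff_lie_eq]
  simp [bondInteraction, bondHop, num, hop, add_lie, lie_add, Ring.mul_lie,
    h.lie_star_mul_star_mul_uncurry, hpp', hpq', hqp', hqq',
    hpp'.symm, hpq'.symm, hqp'.symm, hqq'.symm]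

end DisjointBonds

variable {p q : Λ} (hpq : p ≠ q)
include hpq

theorem lie_num_hop_left (σ : Bool) : ⁅num a p σ, hop a p q σ⁆ = shop a p q σ := by
  simp only [num, hop, lie_add, h.lie_star_mul_star_mul_uncurry, and_self, ↓reduceIte, hpq.symm,
    and_true, sub_zero, hpq, zero_sub, shop]
  abel

theorem lie_num_hop_right (σ : Bool) : ⁅num a q σ, hop a p q σ⁆ = -shop a p q σ := by
  simp only [num, hop, lie_add, h.lie_star_mul_star_mul_uncurry, hpq.symm, and_true, ↓reduceIte,
    and_self, zero_sub, hpq, sub_zero, shop, neg_sub]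
  abel

theorem lie_hop_num_sub_num (σ : Bool) :
    ⁅hop a p q σ, num a p σ - num a q σ⁆ = (-2 : ℂ) • shop a p q σ := by
  simp only [hop, num, lie_sub, add_lie, h.lie_star_mul_star_mul_uncurry, hpq.symm, and_true,
    ↓reduceIte, and_self, zero_sub, hpq, sub_zero, shop, neg_smul]
  module

theorem lie_bondInteraction_bondHop :
    ⁅bondInteraction a p q, bondHop a p q⁆
      = shop a p q true * (num a p false - num a q false)
        + (num a p true - num a q true) * shop a p q false := by
  simp only [bondInteraction, bondHop, Fintype.sum_bool, add_lie, lie_add, Ring.mul_lie,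
    h.lie_num_hop_left hpq, h.lie_num_hop_right hpq, h.lie_num_hop_of_ne, ne_eq,
    Bool.true_eq_false, Bool.false_eq_true, not_false_eq_true]
  noncomm_ring

theorem lie_bondHop_lie_bondInteraction_bondHop :
    ⁅bondHop a p q, ⁅bondInteraction a p q, bondHop a p q⁆⁆
      = (-4 : ℂ) • ((num a p true - num a q true) * (num a p false - num a q false)
        + shop a p q true * shop a p q false) := by
  rw [h.lie_bondInteraction_bondHop hpq, bondHop, Fintype.sum_bool]
  simp only [add_lie, lie_add, Ring.lie_mul, h.lie_hop_shop, h.lie_hop_num_sub_num hpq,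
    h.lie_hop_shop_of_ne, h.lie_hop_num_sub_num_of_ne, ne_eq, Bool.true_eq_false,
    Bool.false_eq_true, not_false_eq_true, add_zero, zero_add, smul_mul_assoc, mul_smul_comm]
  module

end IsCAR

end Hubbard

end LieOfAssociative

theorem nested_comm_FH1_FH3_FH1_general
    {E : Type*} [NormedAddCommGroup E] [InnerProductSpace ℂ E] [CompleteSpace E]
    {L : ℕ}
    (a : ZMod L → Bool → E →L[ℂ] E)
    (car1 : ∀ (i j : ZMod L) (σ τ : Bool), a i σ * a j τ + a j τ * a i σ = 0)
    (car2 : ∀ (i j : ZMod L) (σ τ : Bool),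
      a i σ * star (a j τ) + star (a j τ) * a i σ = if i = j ∧ σ = τ then 1 else 0)
    (v u : ℝ) :
    ⁅FH1 a v, ⁅FH3 a u, FH1 a v⁆⁆
      = (-4 * (v : ℂ) ^ 2 * (u : ℂ)) • ∑ i ∈ Finset.range (L / 2),
          ((num a ((2 * i : ℕ) : ZMod L) true - num a (((2 * i : ℕ) : ZMod L) + 1) true) *
              (num a ((2 * i : ℕ) : ZMod L) false - num a (((2 * i : ℕ) : ZMod L) + 1) false) +
            shop a ((2 * i : ℕ) : ZMod L) (((2 * i : ℕ) : ZMod L) + 1) true *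
              shop a ((2 * i : ℕ) : ZMod L) (((2 * i : ℕ) : ZMod L) + 1) false) := by
  have h := isCAR_uncurry car1 car2
  have hFH1 : FH1 a v = (v : ℂ) • ∑ i ∈ range (L / 2),
      bondHop a ((2 * i : ℕ) : ZMod L) (((2 * i : ℕ) : ZMod L) + 1) := rfl
  have hFH3 : FH3 a u = (u : ℂ) • ∑ i ∈ range (L / 2),
      bondInteraction a ((2 * i : ℕ) : ZMod L) (((2 * i : ℕ) : ZMod L) + 1) := rfl
  rw [hFH1, hFH3, smul_lie_smul_lie_smul, lie_sum_lie_sum_sum, sum_congr rfl fun i hi =>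
      h.lie_bondHop_lie_bondInteraction_bondHop (ZMod.natCast_two_mul_ne_add_one (mem_range.1 hi)),
    ← smul_sum, smul_smul]
  · congr 1
    ring
  · exact fun i hi j hj hij => h.commute_bondHop
      (ZMod.disjoint_natCast_two_mul_pair (mem_range.1 hi) (mem_range.1 hj) hij)
  · exact fun i hi j hj hij => h.commute_bondInteraction_bondHop
      (ZMod.disjoint_natCast_two_mul_pair (mem_range.1 hi) (mem_range.1 hj) hij)

/-- **Nested commutator `[H₁,[H₃,H₁]]` for the 1D Fermi-Hubbard Hamiltonian:**
`[H₁,[H₃,H₁]] = −4v²u Σ_{i∈Λ'} ((n_{i↑} − n_{i+1,↑})(n_{i↓} − n_{i+1,↓})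
+ h̃_{i,i+1,↑}·h̃_{i,i+1,↓})`. -/
theorem nested_comm_FH1_FH3_FH1
    {E : Type*} [NormedAddCommGroup E] [InnerProductSpace ℂ E] [CompleteSpace E]
    {L : ℕ} (hL : Even L) (hL6 : 6 ≤ L)
    (a : ZMod L → Bool → E →L[ℂ] E)
    (car1 : ∀ (i j : ZMod L) (σ τ : Bool), a i σ * a j τ + a j τ * a i σ = 0)
    (car2 : ∀ (i j : ZMod L) (σ τ : Bool),
      a i σ * star (a j τ) + star (a j τ) * a i σ = if i = j ∧ σ = τ then 1 else 0)
    (v u : ℝ) :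
    ⁅FH1 a v, ⁅FH3 a u, FH1 a v⁆⁆
      = (-4 * (v : ℂ) ^ 2 * (u : ℂ)) • ∑ i ∈ Finset.range (L / 2),
          ((num a ((2 * i : ℕ) : ZMod L) true - num a (((2 * i : ℕ) : ZMod L) + 1) true) *
              (num a ((2 * i : ℕ) : ZMod L) false - num a (((2 * i : ℕ) : ZMod L) + 1) false) +
            shop a ((2 * i : ℕ) : ZMod L) (((2 * i : ℕ) : ZMod L) + 1) true *
              shop a ((2 * i : ℕ) : ZMod L) (((2 * i : ℕ) : ZMod L) + 1) false) :=
  nested_comm_FH1_FH3_FH1_general a car1 car2 v u
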